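/- (Theorem 2, minimum invariance, lower-bound direction.) For every Markov policy π, every 0 ≤ k ≤ N and every x ∈ X, the policy safety value satisfies V_k^π(x) ≥ W_k^min(x), where V_k^π(x) = P_{k,x}^π( x_j ∈ A for all k ≤ j ≤ N ) and W_k^min are the minimal DP value functions. Consequently inf_{π} V_k^π(x) ≥ W_k^min(x). -/

import Mathlib

/-! Backward induction in `k` along the fixed policy `π`. For `x ∈ A` the safety probability
satisfies `V_k(x) = ∫ V_{k+1} dκ_k(·|x)`, since the chain started at time `k + 1` does not
touch the coordinate holding `x_k`, while for `x ∉ A` both `V_k(x)` and `W_k^min(x)` vanish.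
Because `κ_k(·|x) = T(·|x, μ_k(x))` is one of the kernels over which `W_k^min(x)` takes its
infimum, `W_k^min(x) ≤ ∫ W_{k+1}^min dκ_k(·|x) ≤ ∫ V_{k+1} dκ_k(·|x) = V_k(x)`. -/

open MeasureTheory ProbabilityTheory Set

noncomputable section

namespace StochasticSafety

variable {X U : Type*} [MeasurableSpace X] [MeasurableSpace U]

/-- A Markov policy: a sequence of (Borel-)measurable maps from states to actions. -/
structure Policy (X U : Type*) [MeasurableSpace X] [MeasurableSpace U] where
  act : ℕ → X → U
  measurable_act : ∀ k, Measurable (act k)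

/-- The closed-loop kernel `κ_k^π(·|x) = T(·|x, μ_k(x))` of a policy at time `k`. -/
def Policy.kernel (T : Kernel (X × U) X) (π : Policy X U) (k : ℕ) : Kernel X X :=
  T.comap (fun x => (x, π.act k x)) (measurable_id.prodMk (π.measurable_act k))

/-- One step of the closed-loop trajectory evolution at time `j`: given the trajectory
built so far, sample `y` from `κ` applied at coordinate `j` and record it at
coordinate `j + 1`. -/
def step (κ : Kernel X X) (j : ℕ) : Kernel (ℕ → X) (ℕ → X) :=
  Kernel.map (Kernel.id ×ₖ κ.comap (fun ω => ω j) (measurable_pi_apply j))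
    (fun p => Function.update p.1 (j + 1) p.2)

/-- Kernel describing `m` steps of the trajectory evolution, starting at time `k`,
under the time-dependent kernels `κ`. -/
def evolve (κ : ℕ → Kernel X X) : ℕ → ℕ → Kernel (ℕ → X) (ℕ → X)
  | _, 0 => Kernel.id
  | k, (m + 1) => (evolve κ (k + 1) m) ∘ₖ step (κ k) k

/-- The law `P_{k,x}^π` of the closed-loop trajectory `(x_k, …, x_N)` started at `x`
at time `k` under policy `π` (finite Ionescu–Tulcea composition of the closed-loop
kernels): the states `x_k, …, x_N` are recorded in coordinates `k, …, N` of `ℕ → X`,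
all other coordinates carry the irrelevant initial value `x`. -/
def trajLaw (T : Kernel (X × U) X) (π : Policy X U) (N k : ℕ) (x : X) :
    Measure (ℕ → X) :=
  evolve (π.kernel T) k (N - k) (fun _ => x)

/-- The event that the trajectory stays in `A` at all times `j` with `k ≤ j ≤ N`. -/
def safeEvent (A : Set X) (k N : ℕ) : Set (ℕ → X) :=
  {ω | ∀ j, k ≤ j → j ≤ N → ω j ∈ A}

/-- The event that the trajectory visits `A` at some time `j` with `k ≤ j ≤ N`. -/
def reachEvent (A : Set X) (k N : ℕ) : Set (ℕ → X) :=
  {ω | ∃ j, k ≤ j ∧ j ≤ N ∧ ω j ∈ A}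


open scoped ENNReal

instance isMarkovKernel_policyKernel (T : Kernel (X × U) X) [IsMarkovKernel T] (π : Policy X U)
    (k : ℕ) : IsMarkovKernel (π.kernel T k) := by
  unfold Policy.kernel; infer_instance

instance [Nonempty U] : Nonempty (Policy X U) :=
  ⟨⟨fun _ _ => Classical.arbitrary U, fun _ => measurable_const⟩⟩

instance isMarkovKernel_step (κ : Kernel X X) [IsMarkovKernel κ] (j : ℕ) :
    IsMarkovKernel (step κ j) :=
  Kernel.IsMarkovKernel.map _ measurable_update'

instance isMarkovKernel_evolve (κ : ℕ → Kernel X X) [∀ i, IsMarkovKernel (κ i)] :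
    ∀ k m, IsMarkovKernel (evolve κ k m)
  | _, 0 => by rw [evolve]; infer_instance
  | k, m + 1 => by
      have := isMarkovKernel_evolve κ (k + 1) m
      rw [evolve]; infer_instance

lemma step_apply (κ : Kernel X X) [IsSFiniteKernel κ] (j : ℕ) (ω : ℕ → X) :
    step κ j ω = (κ (ω j)).map (Function.update ω (j + 1)) := by
  rw [step, Kernel.map_apply _ measurable_update', Kernel.prod_apply, Kernel.id_apply,
    Kernel.comap_apply, Measure.dirac_prod,
    Measure.map_map measurable_update' measurable_prodMk_left]
  rfl

section Evolution

variable (κ : ℕ → Kernel X X) [∀ i, IsSFiniteKernel (κ i)]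

lemma evolve_succ_apply (k m : ℕ) (ω : ℕ → X) {S : Set (ℕ → X)} (hS : MeasurableSet S) :
    evolve κ k (m + 1) ω S
      = ∫⁻ y, evolve κ (k + 1) m (Function.update ω (k + 1) y) S ∂κ k (ω k) := by
  rw [evolve, Kernel.comp_apply' _ _ _ hS, step_apply,
    lintegral_map (Kernel.measurable_coe _ hS) (measurable_update ω)]

lemma ae_evolve_apply_mem {B : Set X} (hB : MeasurableSet B) (m : ℕ) :
    ∀ {k j : ℕ}, j ≤ k → ∀ {ω : ℕ → X}, ω j ∈ B → ∀ᵐ p ∂evolve κ k m ω, p j ∈ B := by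
  induction m with
  | zero =>
    intro k j _ ω hω
    rw [evolve, Kernel.id_apply]
    exact (ae_dirac_iff (measurable_pi_apply j hB)).2 hω
  | succ m ih =>
    intro k j hjk ω hω
    have hS : MeasurableSet {p : ℕ → X | p j ∉ B} := (measurable_pi_apply j hB).compl
    have hnull (y : X) : evolve κ (k + 1) m (Function.update ω (k + 1) y) {p | p j ∉ B} = 0 :=
      ae_iff.1 (ih (by omega) (by rwa [Function.update_of_ne (by omega)]))
    rw [ae_iff, evolve_succ_apply κ k m ω hS]
    simp only [hnull, lintegral_zero]

end Evolution

section SafeEvent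

variable {A : Set X}

lemma measurableSet_safeEvent (hA : MeasurableSet A) (k N : ℕ) :
    MeasurableSet (safeEvent A k N) := by
  simp only [safeEvent, ofPred_forall]
  exact .iInter fun j => .iInter fun _ => .iInter fun _ => measurable_pi_apply j hA

set_option linter.unusedSectionVars false in
lemma safeEvent_self (N : ℕ) : safeEvent A N N = (fun ω => ω N) ⁻¹' A := by
  ext ω
  simp only [safeEvent, mem_ofPred_eq, mem_preimage]
  exact ⟨fun h => h N le_rfl le_rfl, fun h j h₁ h₂ => le_antisymm h₂ h₁ ▸ h⟩

set_option linter.unusedSectionVars false in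
lemma safeEvent_eq_inter {k N : ℕ} (hk : k ≤ N) :
    safeEvent A k N = safeEvent A (k + 1) N ∩ {ω | ω k ∈ A} := by
  ext ω
  simp only [safeEvent, mem_inter_iff, mem_ofPred_eq]
  constructor
  · exact fun h => ⟨fun j hj => h j (by omega), h k le_rfl hk⟩
  · rintro ⟨h, hk⟩ j hkj hjN
    rcases hkj.eq_or_lt with rfl | hlt
    exacts [hk, h j hlt hjN]

end SafeEvent

/-- The probability of staying in `A` at times `k, …, N` when the state at time `k` is `ω k`;
coordinates of `ω` below `k` are carried along but play no role, and `trajLaw` is the case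
`ω = fun _ => x`. -/
def safetyProb (κ : ℕ → Kernel X X) (A : Set X) (N k : ℕ) (ω : ℕ → X) : ℝ≥0∞ :=
  evolve κ k (N - k) ω (safeEvent A k N)

section SafetyProb

variable (κ : ℕ → Kernel X X) {A : Set X} {N : ℕ}

lemma safetyProb_self (hA : MeasurableSet A) (ω : ℕ → X) :
    safetyProb κ A N N ω = A.indicator 1 (ω N) := by
  rw [safetyProb, Nat.sub_self, evolve, Kernel.id_apply,
    Measure.dirac_apply' _ (measurableSet_safeEvent hA N N), safeEvent_self]
  rfl

lemma measurable_safetyProb_update (hA : MeasurableSet A) (k : ℕ) (ω : ℕ → X) :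
    Measurable fun y => safetyProb κ A N k (Function.update ω k y) :=
  (Kernel.measurable_coe _ (measurableSet_safeEvent hA k N)).comp (measurable_update ω)

lemma safetyProb_eq_lintegral [∀ i, IsSFiniteKernel (κ i)] (hA : MeasurableSet A) {k : ℕ}
    (hk : k < N) {ω : ℕ → X} (hω : ω k ∈ A) :
    safetyProb κ A N k ω
      = ∫⁻ y, safetyProb κ A N (k + 1) (Function.update ω (k + 1) y) ∂κ k (ω k) := by
  obtain ⟨m, hm⟩ : ∃ m, N - k = m + 1 := ⟨N - (k + 1), by omega⟩
  have hm' : N - (k + 1) = m := by omega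
  rw [safetyProb, hm, evolve_succ_apply κ k m ω (measurableSet_safeEvent hA k N)]
  refine lintegral_congr fun y => ?_
  rw [safetyProb, hm', safeEvent_eq_inter hk.le]
  refine measure_inter_conull (ae_iff.1 (ae_evolve_apply_mem κ hA m (Nat.le_succ k) ?_))
  rwa [Function.update_of_ne (by omega)]

end SafetyProb

section DynamicProgramming

variable {T : Kernel (X × U) X} {A : Set X} {N : ℕ} {W : ℕ → X → ℝ}

def IsMinDPValue (T : Kernel (X × U) X) (A : Set X) (N : ℕ) (W : ℕ → X → ℝ) : Prop :=
  ∀ k < N, ∀ x, W k x = ⨅ u : U, A.indicator (fun x' => ∫ y, W (k + 1) y ∂(T (x', u))) x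

lemma minDPValue_nonneg (hWN : ∀ x, W N x = A.indicator 1 x) (hW : IsMinDPValue T A N W)
    {k : ℕ} (hk : k ≤ N) : 0 ≤ W k := by
  induction hk using Nat.decreasingInduction with
  | self => intro x; rw [hWN]; exact indicator_nonneg (fun _ _ => zero_le_one) x
  | of_succ k hk ih =>
    intro x
    rw [hW k hk]
    exact Real.iInf_nonneg fun u => indicator_nonneg (fun x' _ => integral_nonneg ih) x

lemma minDPValue_le_integral (hW : IsMinDPValue T A N W) {k : ℕ} (hk : k < N)
    (hnonneg : 0 ≤ W (k + 1)) {x : X} (hx : x ∈ A) (u : U) :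
    W k x ≤ ∫ y, W (k + 1) y ∂(T (x, u)) := by
  have hbdd : BddBelow (range fun u : U =>
      A.indicator (fun x' => ∫ y, W (k + 1) y ∂(T (x', u))) x) := by
    refine ⟨0, ?_⟩
    rintro _ ⟨u, rfl⟩
    exact indicator_nonneg (fun x' _ => integral_nonneg hnonneg) x
  rw [hW k hk]
  exact (ciInf_le hbdd u).trans_eq (indicator_of_mem hx _)

lemma minDPValue_eq_zero_of_notMem (hW : IsMinDPValue T A N W) {k : ℕ} (hk : k < N)
    {x : X} (hx : x ∉ A) : W k x = 0 := by
  simp only [hW k hk, indicator_of_notMem hx, Real.iInf_const_zero]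

theorem minDPValue_le_safetyProb [IsMarkovKernel T] (hA : MeasurableSet A)
    (hWN : ∀ x, W N x = A.indicator 1 x) (hW : IsMinDPValue T A N W)
    (π : Policy X U) {k : ℕ} (hk : k ≤ N) (ω : ℕ → X) :
    W k (ω k) ≤ (safetyProb (π.kernel T) A N k ω).toReal := by
  induction hk using Nat.decreasingInduction generalizing ω with
  | self =>
    rw [hWN, safetyProb_self _ hA]
    by_cases h : ω N ∈ A <;> simp [h]
  | of_succ k hk ih =>
    by_cases hx : ω k ∈ A
    swap
    · rw [minDPValue_eq_zero_of_notMem hW hk hx]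
      exact ENNReal.toReal_nonneg
    set κ := π.kernel T
    set V := fun y => safetyProb κ A N (k + 1) (Function.update ω (k + 1) y)
    have hV : Measurable V := measurable_safetyProb_update κ hA (k + 1) ω
    have hrec : safetyProb κ A N k ω = ∫⁻ y, V y ∂κ k (ω k) :=
      safetyProb_eq_lintegral κ hA hk hx
    have hVint : Integrable (fun y => (V y).toReal) (κ k (ω k)) :=
      integrable_toReal_of_lintegral_ne_top hV.aemeasurable (hrec ▸ measure_ne_top _ _)
    have hWV (y : X) : W (k + 1) y ≤ (V y).toReal := by
      simpa [V] using ih (Function.update ω (k + 1) y)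
    calc W k (ω k)
        ≤ ∫ y, W (k + 1) y ∂κ k (ω k) :=
          minDPValue_le_integral hW hk (minDPValue_nonneg hWN hW hk) hx (π.act k (ω k))
      _ ≤ ∫ y, (V y).toReal ∂κ k (ω k) :=
          integral_mono_of_nonneg (ae_of_all _ (minDPValue_nonneg hWN hW hk)) hVint
            (ae_of_all _ hWV)
      _ = (safetyProb κ A N k ω).toReal := by
          rw [hrec, integral_toReal hV.aemeasurable (ae_of_all _ fun _ => measure_lt_top _ _)]

end DynamicProgramming

variable [StandardBorelSpace X] [TopologicalSpace U]
  [TopologicalSpace.MetrizableSpace U] [CompactSpace U] [Nonempty U] [BorelSpace U]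

theorem policy_value_ge_min_dp_value_general
    (T : Kernel (X × U) X) [IsMarkovKernel T]
    (N : ℕ) (A : Set X) (hA : MeasurableSet A)
    (Wmin : ℕ → X → ℝ)
    (hWN : ∀ x, Wmin N x = A.indicator 1 x)
    (hW : ∀ k < N, ∀ x,
      Wmin k x = ⨅ u : U, A.indicator (fun x' => ∫ y, Wmin (k + 1) y ∂(T (x', u))) x) :
    (∀ π : Policy X U, ∀ k ≤ N, ∀ x,
        Wmin k x ≤ (trajLaw T π N k x (safeEvent A k N)).toReal) ∧
    (∀ k ≤ N, ∀ x,
        Wmin k x ≤ ⨅ π : Policy X U, (trajLaw T π N k x (safeEvent A k N)).toReal) := by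
  have hπ (π : Policy X U) (k : ℕ) (hk : k ≤ N) (x : X) :
      Wmin k x ≤ (trajLaw T π N k x (safeEvent A k N)).toReal :=
    minDPValue_le_safetyProb hA hWN hW π hk fun _ => x
  exact ⟨hπ, fun k hk x => le_ciInf fun π => hπ π k hk x⟩

/-- Theorem 2, minimum invariance, lower bound: for every Markov policy
`π`, every `0 ≤ k ≤ N` and every `x`, the policy safety value
`V_k^π(x) = P_{k,x}^π(x_j ∈ A for all k ≤ j ≤ N)` is at least the minimal DP value
`W_k^min(x)`; consequently `inf_π V_k^π(x) ≥ W_k^min(x)`. -/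
theorem policy_value_ge_min_dp_value
    (T : Kernel (X × U) X) [IsMarkovKernel T]
    (N : ℕ) (A : Set X) (hA : MeasurableSet A)
    (Wmin : ℕ → X → ℝ) (hWmeas : ∀ k, Measurable (Wmin k))
    (hWN : ∀ x, Wmin N x = A.indicator 1 x)
    (hW : ∀ k < N, ∀ x,
      Wmin k x = ⨅ u : U, A.indicator (fun x' => ∫ y, Wmin (k + 1) y ∂(T (x', u))) x) :
    (∀ π : Policy X U, ∀ k ≤ N, ∀ x,
        Wmin k x ≤ (trajLaw T π N k x (safeEvent A k N)).toReal) ∧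
    (∀ k ≤ N, ∀ x,
        Wmin k x ≤ ⨅ π : Policy X U, (trajLaw T π N k x (safeEvent A k N)).toReal) :=
  policy_value_ge_min_dp_value_general T N A hA Wmin hWN hW

end StochasticSafety
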